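/- MIOs with synchronous composition, weak modal refinement, and weak modal compatibility form an interface theory: weakly compatible MIOs are composable; weak modal refinement is preserved by synchronous composition; and weak modal compatibility is preserved by weak modal refinement. -/

import Mathlib

/-- A modal I/O-transition system (MIO): states, an initial state, a signature of
input, output and internal actions (pairwise disjoint subsets of the action
universe `A`), may-transitions and must-transitions with must ⊆ may. -/
structure MIO (A : Type) where
  State : Type
  start : State
  inp : Set A
  out : Set A
  intl : Set A
  may : State → A → State → Prop
  must : State → A → State → Prop
  inp_out : ∀ a, a ∈ inp → a ∈ out → False
  inp_intl : ∀ a, a ∈ inp → a ∈ intl → False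
  out_intl : ∀ a, a ∈ out → a ∈ intl → False
  must_sub : ∀ s a s', must s a s' → may s a s'

namespace MIO

variable {A B : Type}

/-- The set of all actions of a MIO. -/
def act (S : MIO A) : Set A := S.inp ∪ S.out ∪ S.intl

/-- Two MIOs have the same signature. -/
def SigEq (S T : MIO A) : Prop := S.inp = T.inp ∧ S.out = T.out ∧ S.intl = T.intl

/-- Strong modal refinement `S ≤_m T`. -/
def StrongRefines (S T : MIO A) : Prop :=
  SigEq S T ∧
  ∃ R : S.State → T.State → Prop, R S.start T.start ∧
    ∀ s t, R s t →
      (∀ a t', T.must t a t' → ∃ s', S.must s a s' ∧ R s' t') ∧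
      (∀ a s', S.may s a s' → ∃ t', T.may t a t' ∧ R s' t')

/-- One internal must-transition. -/
def tauMust (S : MIO A) (s s' : S.State) : Prop := ∃ a ∈ S.intl, S.must s a s'

/-- Finitely many (possibly zero) internal must-transitions. -/
def tauMustStar (S : MIO A) : S.State → S.State → Prop := Relation.ReflTransGen S.tauMust

/-- One internal may-transition. -/
def tauMay (S : MIO A) (s s' : S.State) : Prop := ∃ a ∈ S.intl, S.may s a s'

/-- Finitely many (possibly zero) internal may-transitions. -/
def tauMayStar (S : MIO A) : S.State → S.State → Prop := Relation.ReflTransGen S.tauMay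

/-- Weak modal refinement `S ≤_m* T`. -/
def WeakRefines (S T : MIO A) : Prop :=
  SigEq S T ∧
  ∃ R : S.State → T.State → Prop, R S.start T.start ∧
    ∀ s t, R s t →
      (∀ a ∈ T.inp ∪ T.out, ∀ t', T.must t a t' →
        ∃ s1 s2 s', S.tauMustStar s s1 ∧ S.must s1 a s2 ∧ S.tauMustStar s2 s' ∧ R s' t') ∧
      (∀ a ∈ T.intl, ∀ t', T.must t a t' → ∃ s', S.tauMustStar s s' ∧ R s' t') ∧
      (∀ a ∈ S.inp ∪ S.out, ∀ s', S.may s a s' →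
        ∃ t1 t2 t', T.tauMayStar t t1 ∧ T.may t1 a t2 ∧ T.tauMayStar t2 t' ∧ R s' t') ∧
      (∀ a ∈ S.intl, ∀ s', S.may s a s' → ∃ t', T.tauMayStar t t' ∧ R s' t')

/-- Shared actions of two MIOs. -/
def shared (S T : MIO A) : Set A := S.act ∩ T.act

/-- Two MIOs are (syntactically) composable if their actions overlap only on
complementary types. -/
def Composable (S T : MIO A) : Prop :=
  shared S T ⊆ (S.inp ∩ T.out) ∪ (T.inp ∩ S.out)

/-- Synchronous composition `S ⊗_sy T` of composable MIOs. -/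
def syncComp (S T : MIO A) (_h : Composable S T) : MIO A where
  State := S.State × T.State
  start := (S.start, T.start)
  inp := (S.inp ∪ T.inp) \ shared S T
  out := (S.out ∪ T.out) \ shared S T
  intl := S.intl ∪ T.intl ∪ shared S T
  may p a p' :=
    (a ∈ shared S T ∧ S.may p.1 a p'.1 ∧ T.may p.2 a p'.2) ∨
    (a ∈ S.act ∧ a ∉ shared S T ∧ S.may p.1 a p'.1 ∧ p'.2 = p.2) ∨
    (a ∈ T.act ∧ a ∉ shared S T ∧ T.may p.2 a p'.2 ∧ p'.1 = p.1)
  must p a p' :=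
    (a ∈ shared S T ∧ S.must p.1 a p'.1 ∧ T.must p.2 a p'.2) ∨
    (a ∈ S.act ∧ a ∉ shared S T ∧ S.must p.1 a p'.1 ∧ p'.2 = p.2) ∨
    (a ∈ T.act ∧ a ∉ shared S T ∧ T.must p.2 a p'.2 ∧ p'.1 = p.1)
  inp_out := by
    intro a ha hb
    have h1 := S.inp_out a; have h2 := T.inp_out a
    simp only [Set.mem_diff, Set.mem_union, shared, act, Set.mem_inter_iff] at ha hb
    tauto
  inp_intl := by
    intro a ha hb
    have h1 := S.inp_intl a; have h2 := T.inp_intl a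
    simp only [Set.mem_diff, Set.mem_union, shared, act, Set.mem_inter_iff] at ha hb
    tauto
  out_intl := by
    intro a ha hb
    have h1 := S.out_intl a; have h2 := T.out_intl a
    simp only [Set.mem_diff, Set.mem_union, shared, act, Set.mem_inter_iff] at ha hb
    tauto
  must_sub := by
    rintro p a p' (⟨h1, h2, h3⟩ | ⟨h1, h2, h3, h4⟩ | ⟨h1, h2, h3, h4⟩)
    · exact Or.inl ⟨h1, S.must_sub _ _ _ h2, T.must_sub _ _ _ h3⟩
    · exact Or.inr (Or.inl ⟨h1, h2, S.must_sub _ _ _ h3, h4⟩)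
    · exact Or.inr (Or.inr ⟨h1, h2, T.must_sub _ _ _ h3, h4⟩)

/-- Reachability (w.r.t. may-transitions) from the initial state. -/
def Reachable (M : MIO A) (s : M.State) : Prop :=
  Relation.ReflTransGen (fun x y => ∃ a, M.may x a y) M.start s

/-- Strong modal compatibility `S ⇄_sc T`. -/
def StrongCompat (S T : MIO A) : Prop :=
  ∃ h : Composable S T,
    ∀ p : S.State × T.State, (syncComp S T h).Reachable p →
      (∀ a ∈ S.out ∩ T.inp, ∀ s', S.may p.1 a s' → ∃ t', T.must p.2 a t') ∧
      (∀ a ∈ T.out ∩ S.inp, ∀ t', T.may p.2 a t' → ∃ s', S.must p.1 a s')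

/-- Weak modal compatibility `S ⇄_wc T`. -/
def WeakCompat (S T : MIO A) : Prop :=
  ∃ h : Composable S T,
    ∀ p : S.State × T.State, (syncComp S T h).Reachable p →
      (∀ a ∈ S.out ∩ T.inp, ∀ s', S.may p.1 a s' →
        ∃ t1 t', T.tauMustStar p.2 t1 ∧ T.must t1 a t') ∧
      (∀ a ∈ T.out ∩ S.inp, ∀ t', T.may p.2 a t' →
        ∃ s1 s', S.tauMustStar p.1 s1 ∧ S.must s1 a s')

/-- Finite executions: `Trace M s as s'` means `M` can go from `s` to `s'` by
a sequence of may-transitions labelled by the list of actions `as`. -/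
inductive Trace (M : MIO A) : M.State → List A → M.State → Prop
  | nil (s : M.State) : Trace M s [] s
  | cons {s s' s'' : M.State} {a : A} {as : List A} :
      M.may s a s' → Trace M s' as s'' → Trace M s (a :: as) s''

/-- Renaming the actions of a MIO along an injective function. -/
def rename (f : A → B) (hf : Function.Injective f) (S : MIO A) : MIO B where
  State := S.State
  start := S.start
  inp := f '' S.inp
  out := f '' S.out
  intl := f '' S.intl
  may s b s' := ∃ a, b = f a ∧ S.may s a s'
  must s b s' := ∃ a, b = f a ∧ S.must s a s'
  inp_out := by
    rintro b ⟨a1, h1, rfl⟩ ⟨a2, h2, heq⟩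
    obtain rfl := hf heq
    exact S.inp_out a2 h1 h2
  inp_intl := by
    rintro b ⟨a1, h1, rfl⟩ ⟨a2, h2, heq⟩
    obtain rfl := hf heq
    exact S.inp_intl a2 h1 h2
  out_intl := by
    rintro b ⟨a1, h1, rfl⟩ ⟨a2, h2, heq⟩
    obtain rfl := hf heq
    exact S.out_intl a2 h1 h2
  must_sub := by
    rintro s b s' ⟨a, rfl, h⟩
    exact ⟨a, rfl, S.must_sub _ _ _ h⟩

-- Tagging function: actions in `o` become the fresh "queue input" actions `n^▷`
-- (encoded as `Sum.inr n`), all other actions are kept (as `Sum.inl a`).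
open Classical in
noncomputable def tagged (o : Set A) : A → A ⊕ A :=
  fun a => if a ∈ o then Sum.inr a else Sum.inl a

theorem tagged_injective (o : Set A) : Function.Injective (tagged o) := by
  classical
  intro a b h
  by_cases ha : a ∈ o <;> by_cases hb : b ∈ o <;>
    simp [tagged, ha, hb] at h <;> tauto

/-- The queue MIO `Q_o`: a FIFO buffer for messages in `o`. States are finite
strings over `A` (with reachable states being strings over `o`), inputs are the
tagged actions `n^▷ = Sum.inr n`, outputs the actions `n = Sum.inl n` for `n ∈ o`.
Enqueue at the front, dequeue from the back; may- and must-transitions coincide. -/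
def queueMIO (o : Set A) : MIO (A ⊕ A) where
  State := List A
  start := []
  inp := Sum.inr '' o
  out := Sum.inl '' o
  intl := ∅
  may s b s' :=
    (∃ n ∈ o, b = Sum.inr n ∧ s' = n :: s) ∨ (∃ n ∈ o, b = Sum.inl n ∧ s = s' ++ [n])
  must s b s' :=
    (∃ n ∈ o, b = Sum.inr n ∧ s' = n :: s) ∨ (∃ n ∈ o, b = Sum.inl n ∧ s = s' ++ [n])
  inp_out := by rintro b ⟨n, hn, rfl⟩ ⟨m, hm, h⟩; simp at h
  inp_intl := by rintro b _ h; simp at h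
  out_intl := by rintro b _ h; simp at h
  must_sub := fun _ _ _ h => h

theorem omega_composable (o : Set A) (S : MIO A) (ho : o ⊆ S.out) :
    Composable (rename (tagged o) (tagged_injective o) S) (queueMIO o) := by
  classical
  rintro b ⟨hb1, hb2⟩
  have hq : (∃ n ∈ o, Sum.inr n = b) ∨ (∃ n ∈ o, Sum.inl n = b) := by
    simpa [queueMIO, act, Set.image, Set.mem_union] using hb2
  have hr : ∃ a, ((a ∈ S.inp ∨ a ∈ S.out) ∨ a ∈ S.intl) ∧ tagged o a = b := by
    simpa [rename, act, ← Set.image_union] using hb1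
  obtain ⟨a, _, ha⟩ := hr
  rcases hq with ⟨n, hn, hb⟩ | ⟨n, hn, hb⟩
  · right
    constructor
    · exact ⟨n, hn, hb⟩
    · refine ⟨n, ho hn, ?_⟩
      rw [← hb]; simp [tagged, hn]
  · exfalso
    rw [← hb] at ha
    by_cases h : a ∈ o
    · simp [tagged, h] at ha
    · simp [tagged, h] at ha
      exact h (ha ▸ hn)

/-- `Ω_o(S)`: the MIO `S` with an output queue for `o ⊆ out_S`, i.e. the
synchronous product of the renamed MIO `S_o^▷` with the queue MIO `Q_o`. -/
noncomputable def Omega (o : Set A) (S : MIO A) (ho : o ⊆ S.out) : MIO (A ⊕ A) :=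
  syncComp (rename (tagged o) (tagged_injective o) S) (queueMIO o) (omega_composable o S ho)

/-- The outputs of `S` that are inputs of `T`. -/
def oOf (S T : MIO A) : Set A := S.out ∩ T.inp

/-- `Ω_{o_S}(S)` where `o_S = out_S ∩ in_T`. -/
noncomputable def OmegaC (S T : MIO A) : MIO (A ⊕ A) :=
  Omega (oOf S T) S Set.inter_subset_left

/-- Composability of the queue-extended MIOs, i.e. definedness of `S ⊗_as T`. -/
def AsyncComposable (S T : MIO A) : Prop := Composable (OmegaC S T) (OmegaC T S)

/-- Asynchronous composition `S ⊗_as T = Ω_{o_S}(S) ⊗_sy Ω_{o_T}(T)`. -/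
noncomputable def asyncComp (S T : MIO A) (h : AsyncComposable S T) : MIO (A ⊕ A) :=
  syncComp (OmegaC S T) (OmegaC T S) h

/-- Asynchronous modal compatibility `S ⇄_ac T`. -/
def AsyncCompat (S T : MIO A) : Prop :=
  Composable S T ∧ WeakCompat (OmegaC S T) (OmegaC T S)

end MIO

open MIO

/-!
Weak modal refinement is a pair of weak simulations, one of the abstract must-transitions by the
concrete ones and one of the concrete may-transitions by the abstract ones, and both transition
relations of a synchronous product are built from the components' by the same recipe `syncStep`.
Componentwise weak simulations therefore combine into a weak simulation of the products: local
steps lift directly, and a synchronisation of two weak visible steps becomes a sequence of internal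
steps of the product. This is the preservation of refinement. Applied to may-transitions it also
shows that every reachable state of `S' ⊗ T'` is related to a reachable state of `S ⊗ T`, where
the compatibility of `S` and `T` applies and is carried over to `S'` and `T'`.
-/

namespace MIO

variable {A α β : Type}

section Relations

variable {I O : Set A} {r : α → A → α → Prop} {r' : β → A → β → Prop}
  {R : α → β → Prop}

def tauStar (I : Set A) (r : α → A → α → Prop) : α → α → Prop :=
  Relation.ReflTransGen fun x y => ∃ a ∈ I, r x a y

def weakStep (I : Set A) (r : α → A → α → Prop) (x : α) (a : A) (y : α) : Prop :=
  ∃ x₁ x₂, tauStar I r x x₁ ∧ r x₁ a x₂ ∧ tauStar I r x₂ y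

/-- `R` is a weak simulation of `r` by `r'` with internal labels `I` and visible labels `O`.
Weak modal refinement `S' ≤_m* S` via `R` is a pair of them: `S.must` by `S'.must` via `flip R`
and `S'.may` by `S.may` via `R` (`weakRefines_iff_isWeakSim`). -/
def IsWeakSim (I O : Set A) (r : α → A → α → Prop) (r' : β → A → β → Prop)
    (R : α → β → Prop) : Prop :=
  ∀ x y, R x y →
    (∀ a ∈ O, ∀ x', r x a x' → ∃ y', weakStep I r' y a y' ∧ R x' y') ∧
    (∀ a ∈ I, ∀ x', r x a x' → ∃ y', tauStar I r' y y' ∧ R x' y')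

theorem tauStar.reflTransGen {x y : α} (h : tauStar I r x y) :
    Relation.ReflTransGen (fun x y => ∃ a, r x a y) x y :=
  Relation.ReflTransGen.mono (fun _ _ ⟨a, _, hr⟩ => ⟨a, hr⟩) _ _ h

theorem weakStep.reflTransGen {x y : α} {a : A} (h : weakStep I r x a y) :
    Relation.ReflTransGen (fun x y => ∃ a, r x a y) x y := by
  obtain ⟨x₁, x₂, h₁, hr, h₂⟩ := h
  exact (h₁.reflTransGen.tail ⟨a, hr⟩).trans h₂.reflTransGen

theorem IsWeakSim.exists_tauStar (hsim : IsWeakSim I O r r' R) {x x' : α} {y : β}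
    (hR : R x y) (hx : tauStar I r x x') : ∃ y', tauStar I r' y y' ∧ R x' y' := by
  induction hx with
  | refl => exact ⟨y, .refl, hR⟩
  | tail _ hstep ih =>
    obtain ⟨y₁, hy₁, hR₁⟩ := ih
    obtain ⟨a, ha, hr⟩ := hstep
    obtain ⟨y', hy', hR'⟩ := (hsim _ _ hR₁).2 a ha _ hr
    exact ⟨y', hy₁.trans hy', hR'⟩

theorem IsWeakSim.exists_tauStar_step (hsim : IsWeakSim I O r r' R) {x x₁ x₂ : α} {y : β}
    {a : A} (ha : a ∈ O) (hR : R x y) (hx : tauStar I r x x₁) (hr : r x₁ a x₂) :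
    ∃ y₁ y₂, tauStar I r' y y₁ ∧ r' y₁ a y₂ := by
  obtain ⟨y', hy', hR'⟩ := hsim.exists_tauStar hR hx
  obtain ⟨-, ⟨y₁, y₂, hy₁, hr', -⟩, -⟩ := (hsim _ _ hR').1 a ha _ hr
  exact ⟨y₁, y₂, hy'.trans hy₁, hr'⟩

theorem IsWeakSim.exists_reachable (hsim : IsWeakSim I O r r' R)
    (hlabel : ∀ x a x', r x a x' → a ∈ O ∪ I) {x₀ x : α} {y₀ : β} (h₀ : R x₀ y₀)
    (hx : Relation.ReflTransGen (fun x x' => ∃ a, r x a x') x₀ x) :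
    ∃ y, Relation.ReflTransGen (fun y y' => ∃ a, r' y a y') y₀ y ∧ R x y := by
  induction hx with
  | refl => exact ⟨y₀, .refl, h₀⟩
  | tail _ hstep ih =>
    obtain ⟨y, hy, hR⟩ := ih
    obtain ⟨a, hr⟩ := hstep
    rcases hlabel _ _ _ hr with ha | ha
    · obtain ⟨y', hy', hR'⟩ := (hsim _ _ hR).1 a ha _ hr
      exact ⟨y', hy.trans hy'.reflTransGen, hR'⟩
    · obtain ⟨y', hy', hR'⟩ := (hsim _ _ hR).2 a ha _ hr
      exact ⟨y', hy.trans hy'.reflTransGen, hR'⟩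

end Relations

/-- Both `(syncComp S T h).must` and `(syncComp S T h).may` are `syncStep (shared S T) S.act T.act`
applied to the component relations (see `syncComp_must_eq_of_sigEq`). -/
def syncStep (sh aS aT : Set A) (rS : α → A → α → Prop) (rT : β → A → β → Prop)
    (p : α × β) (a : A) (p' : α × β) : Prop :=
  (a ∈ sh ∧ rS p.1 a p'.1 ∧ rT p.2 a p'.2) ∨
  (a ∈ aS ∧ a ∉ sh ∧ rS p.1 a p'.1 ∧ p'.2 = p.2) ∨
  (a ∈ aT ∧ a ∉ sh ∧ rT p.2 a p'.2 ∧ p'.1 = p.1)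

section Signature

variable {S T S' T' : MIO A} {a : A}

theorem notMem_shared_of_mem_intl_left (h : Composable S T) (ha : a ∈ S.intl) :
    a ∉ shared S T := fun hsh => by
  rcases h hsh with ⟨hi, -⟩ | ⟨-, ho⟩
  exacts [S.inp_intl a hi ha, S.out_intl a ho ha]

theorem notMem_shared_of_mem_intl_right (h : Composable S T) (ha : a ∈ T.intl) :
    a ∉ shared S T := fun hsh => by
  rcases h hsh with ⟨-, ho⟩ | ⟨hi, -⟩
  exacts [T.out_intl a ho ha, T.inp_intl a hi ha]

theorem mem_io_left_of_mem_shared (h : Composable S T) (ha : a ∈ shared S T) :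
    a ∈ S.inp ∪ S.out := by
  rcases h ha with ⟨hi, -⟩ | ⟨-, ho⟩
  exacts [Or.inl hi, Or.inr ho]

theorem mem_io_right_of_mem_shared (h : Composable S T) (ha : a ∈ shared S T) :
    a ∈ T.inp ∪ T.out := by
  rcases h ha with ⟨-, ho⟩ | ⟨hi, -⟩
  exacts [Or.inr ho, Or.inl hi]

theorem mem_io_left_of_mem_syncComp_io (h : Composable S T) (haS : a ∈ S.act)
    (hns : a ∉ shared S T) (ha : a ∈ (syncComp S T h).inp ∪ (syncComp S T h).out) :
    a ∈ S.inp ∪ S.out := by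
  have := S.inp_intl a; have := S.out_intl a
  simp only [syncComp, shared, act, Set.mem_union, Set.mem_sdiff, Set.mem_inter_iff] at *
  tauto

theorem mem_io_right_of_mem_syncComp_io (h : Composable S T) (haT : a ∈ T.act)
    (hns : a ∉ shared S T) (ha : a ∈ (syncComp S T h).inp ∪ (syncComp S T h).out) :
    a ∈ T.inp ∪ T.out := by
  have := T.inp_intl a; have := T.out_intl a
  simp only [syncComp, shared, act, Set.mem_union, Set.mem_sdiff, Set.mem_inter_iff] at *
  tauto

theorem mem_intl_left_of_mem_syncComp_intl (h : Composable S T) (haS : a ∈ S.act)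
    (hns : a ∉ shared S T) (ha : a ∈ (syncComp S T h).intl) : a ∈ S.intl := by
  simp only [syncComp, shared, act, Set.mem_union, Set.mem_inter_iff] at *
  tauto

theorem mem_intl_right_of_mem_syncComp_intl (h : Composable S T) (haT : a ∈ T.act)
    (hns : a ∉ shared S T) (ha : a ∈ (syncComp S T h).intl) : a ∈ T.intl := by
  simp only [syncComp, shared, act, Set.mem_union, Set.mem_inter_iff] at *
  tauto

theorem mem_act_syncComp_of_syncStep (h : Composable S T) {rS : α → A → α → Prop}
    {rT : β → A → β → Prop} {p p' : α × β}
    (hp : syncStep (shared S T) S.act T.act rS rT p a p') : a ∈ (syncComp S T h).act := by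
  rcases hp with ⟨hsh, -⟩ | ⟨haS, hns, -⟩ | ⟨haT, hns, -⟩
  · exact Or.inr (Or.inr hsh)
  · rcases haS with (hi | ho) | hl
    exacts [Or.inl (Or.inl ⟨Or.inl hi, hns⟩), Or.inl (Or.inr ⟨Or.inl ho, hns⟩),
      Or.inr (Or.inl (Or.inl hl))]
  · rcases haT with (hi | ho) | hl
    exacts [Or.inl (Or.inl ⟨Or.inr hi, hns⟩), Or.inl (Or.inr ⟨Or.inr ho, hns⟩),
      Or.inr (Or.inl (Or.inr hl))]

theorem SigEq.act_eq (h : SigEq S' S) : S'.act = S.act := by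
  obtain ⟨h₁, h₂, h₃⟩ := h
  simp only [act, h₁, h₂, h₃]

theorem shared_eq_of_sigEq (hS : SigEq S' S) (hT : SigEq T' T) :
    shared S' T' = shared S T := by
  simp only [shared, hS.act_eq, hT.act_eq]

theorem Composable.of_sigEq (h : Composable S T) (hS : SigEq S' S) (hT : SigEq T' T) :
    Composable S' T' := by
  unfold Composable
  rw [shared_eq_of_sigEq hS hT, hS.1, hS.2.1, hT.1, hT.2.1]
  exact h

theorem syncComp_sigEq (h : Composable S T) (h' : Composable S' T') (hS : SigEq S' S)
    (hT : SigEq T' T) : SigEq (syncComp S' T' h') (syncComp S T h) := by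
  refine ⟨?_, ?_, ?_⟩ <;>
  simp only [syncComp, shared_eq_of_sigEq hS hT, hS.1, hS.2.1, hS.2.2, hT.1, hT.2.1, hT.2.2]

theorem syncComp_must_eq_of_sigEq (h' : Composable S' T') (hS : SigEq S' S)
    (hT : SigEq T' T) :
    (syncComp S' T' h').must = syncStep (shared S T) S.act T.act S'.must T'.must := by
  rw [← shared_eq_of_sigEq hS hT, ← hS.act_eq, ← hT.act_eq]
  rfl

theorem syncComp_may_eq_of_sigEq (h' : Composable S' T') (hS : SigEq S' S)
    (hT : SigEq T' T) :
    (syncComp S' T' h').may = syncStep (shared S T) S.act T.act S'.may T'.may := by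
  rw [← shared_eq_of_sigEq hS hT, ← hS.act_eq, ← hT.act_eq]
  rfl

end Signature

section Product

variable {S T : MIO A} (h : Composable S T) {γ δ : Type}
  {rS : α → A → α → Prop} {rT : β → A → β → Prop}

theorem tauStar_syncStep_left {x x' : α} (y : β) (hx : tauStar S.intl rS x x') :
    tauStar (syncComp S T h).intl (syncStep (shared S T) S.act T.act rS rT) (x, y) (x', y) :=
  Relation.ReflTransGen.lift (·, y) (fun _ _ ⟨a, ha, hr⟩ => ⟨a, Or.inl (Or.inl ha),
    Or.inr (Or.inl ⟨Or.inr ha, notMem_shared_of_mem_intl_left h ha, hr, rfl⟩)⟩) _ _ hx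

theorem tauStar_syncStep_right (x : α) {y y' : β} (hy : tauStar T.intl rT y y') :
    tauStar (syncComp S T h).intl (syncStep (shared S T) S.act T.act rS rT) (x, y) (x, y') :=
  Relation.ReflTransGen.lift (x, ·) (fun _ _ ⟨a, ha, hr⟩ => ⟨a, Or.inl (Or.inr ha),
    Or.inr (Or.inr ⟨Or.inr ha, notMem_shared_of_mem_intl_right h ha, hr, rfl⟩)⟩) _ _ hy

theorem weakStep_syncStep_left {x x' : α} {a : A} (y : β) (haS : a ∈ S.act)
    (hns : a ∉ shared S T) (hx : weakStep S.intl rS x a x') :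
    weakStep (syncComp S T h).intl (syncStep (shared S T) S.act T.act rS rT)
      (x, y) a (x', y) := by
  obtain ⟨x₁, x₂, h₁, hr, h₂⟩ := hx
  exact ⟨(x₁, y), (x₂, y), tauStar_syncStep_left h y h₁,
    Or.inr (Or.inl ⟨haS, hns, hr, rfl⟩), tauStar_syncStep_left h y h₂⟩

theorem weakStep_syncStep_right (x : α) {y y' : β} {a : A} (haT : a ∈ T.act)
    (hns : a ∉ shared S T) (hy : weakStep T.intl rT y a y') :
    weakStep (syncComp S T h).intl (syncStep (shared S T) S.act T.act rS rT)
      (x, y) a (x, y') := by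
  obtain ⟨y₁, y₂, h₁, hr, h₂⟩ := hy
  exact ⟨(x, y₁), (x, y₂), tauStar_syncStep_right h x h₁,
    Or.inr (Or.inr ⟨haT, hns, hr, rfl⟩), tauStar_syncStep_right h x h₂⟩

theorem tauStar_syncStep_of_weakStep {x x' : α} {y y' : β} {a : A} (hsh : a ∈ shared S T)
    (hx : weakStep S.intl rS x a x') (hy : weakStep T.intl rT y a y') :
    tauStar (syncComp S T h).intl (syncStep (shared S T) S.act T.act rS rT)
      (x, y) (x', y') := by
  obtain ⟨x₁, x₂, hx₁, hrS, hx₂⟩ := hx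
  obtain ⟨y₁, y₂, hy₁, hrT, hy₂⟩ := hy
  have hsync : tauStar (syncComp S T h).intl (syncStep (shared S T) S.act T.act rS rT)
      (x₁, y₁) (x₂, y₂) := .single ⟨a, Or.inr hsh, Or.inl ⟨hsh, hrS, hrT⟩⟩
  exact (tauStar_syncStep_left h y hx₁).trans <| (tauStar_syncStep_right h x₁ hy₁).trans <|
    hsync.trans <| (tauStar_syncStep_left h y₂ hx₂).trans (tauStar_syncStep_right h x' hy₂)

theorem IsWeakSim.syncStep {rS' : γ → A → γ → Prop} {rT' : δ → A → δ → Prop}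
    {RS : α → γ → Prop} {RT : β → δ → Prop}
    (hS : IsWeakSim S.intl (S.inp ∪ S.out) rS rS' RS)
    (hT : IsWeakSim T.intl (T.inp ∪ T.out) rT rT' RT) :
    IsWeakSim (syncComp S T h).intl ((syncComp S T h).inp ∪ (syncComp S T h).out)
      (syncStep (shared S T) S.act T.act rS rT) (syncStep (shared S T) S.act T.act rS' rT')
      (fun p q => RS p.1 q.1 ∧ RT p.2 q.2) := by
  rintro ⟨x, y⟩ ⟨x', y'⟩ ⟨hx, hy⟩
  refine ⟨fun a ha ⟨x₁, y₁⟩ hstep => ?_, fun a ha ⟨x₁, y₁⟩ hstep => ?_⟩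
  · rcases hstep with ⟨hsh, -⟩ | ⟨haS, hns, hr, rfl⟩ | ⟨haT, hns, hr, rfl⟩
    · exact absurd hsh (ha.elim (·.2) (·.2))
    · obtain ⟨x₁', hw, hR⟩ :=
        (hS _ _ hx).1 a (mem_io_left_of_mem_syncComp_io h haS hns ha) _ hr
      exact ⟨(x₁', y'), weakStep_syncStep_left h y' haS hns hw, hR, hy⟩
    · obtain ⟨y₁', hw, hR⟩ :=
        (hT _ _ hy).1 a (mem_io_right_of_mem_syncComp_io h haT hns ha) _ hr
      exact ⟨(x', y₁'), weakStep_syncStep_right h x' haT hns hw, hx, hR⟩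
  · rcases hstep with ⟨hsh, hrS, hrT⟩ | ⟨haS, hns, hr, rfl⟩ | ⟨haT, hns, hr, rfl⟩
    · obtain ⟨x₁', hwS, hRS⟩ := (hS _ _ hx).1 a (mem_io_left_of_mem_shared h hsh) _ hrS
      obtain ⟨y₁', hwT, hRT⟩ := (hT _ _ hy).1 a (mem_io_right_of_mem_shared h hsh) _ hrT
      exact ⟨(x₁', y₁'), tauStar_syncStep_of_weakStep h hsh hwS hwT, hRS, hRT⟩
    · obtain ⟨x₁', hw, hR⟩ :=
        (hS _ _ hx).2 a (mem_intl_left_of_mem_syncComp_intl h haS hns ha) _ hr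
      exact ⟨(x₁', y'), tauStar_syncStep_left h y' hw, hR, hy⟩
    · obtain ⟨y₁', hw, hR⟩ :=
        (hT _ _ hy).2 a (mem_intl_right_of_mem_syncComp_intl h haT hns ha) _ hr
      exact ⟨(x', y₁'), tauStar_syncStep_right h x' hw, hx, hR⟩

end Product

section Refinement

variable {S T S' T' : MIO A}

theorem weakRefines_iff_isWeakSim (hsig : SigEq S' S) :
    WeakRefines S' S ↔ ∃ R : S'.State → S.State → Prop, R S'.start S.start ∧
      IsWeakSim S.intl (S.inp ∪ S.out) S.must S'.must (flip R) ∧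
      IsWeakSim S.intl (S.inp ∪ S.out) S'.may S.may R := by
  obtain ⟨hi, ho, hl⟩ := hsig
  unfold WeakRefines IsWeakSim weakStep tauMustStar tauMayStar tauMust tauMay
  rw [hi, ho, hl]
  constructor
  · rintro ⟨-, R, h₀, hR⟩
    refine ⟨R, h₀, fun t s hst => ⟨fun a ha t' ht => ?_, (hR s t hst).2.1⟩,
      fun s t hst => ⟨fun a ha s' hs => ?_, (hR s t hst).2.2.2⟩⟩
    · obtain ⟨s₁, s₂, s', h₁, h₂, h₃, h'⟩ := (hR s t hst).1 a ha t' ht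
      exact ⟨s', ⟨s₁, s₂, h₁, h₂, h₃⟩, h'⟩
    · obtain ⟨t₁, t₂, t', h₁, h₂, h₃, h'⟩ := (hR s t hst).2.2.1 a ha s' hs
      exact ⟨t', ⟨t₁, t₂, h₁, h₂, h₃⟩, h'⟩
  · rintro ⟨R, h₀, hmust, hmay⟩
    refine ⟨⟨hi, ho, hl⟩, R, h₀, fun s t hst => ⟨fun a ha t' ht => ?_, (hmust t s hst).2,
      fun a ha s' hs => ?_, (hmay s t hst).2⟩⟩
    · obtain ⟨s', ⟨s₁, s₂, h₁, h₂, h₃⟩, h'⟩ := (hmust t s hst).1 a ha t' ht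
      exact ⟨s₁, s₂, s', h₁, h₂, h₃, h'⟩
    · obtain ⟨t', ⟨t₁, t₂, h₁, h₂, h₃⟩, h'⟩ := (hmay s t hst).1 a ha s' hs
      exact ⟨t₁, t₂, t', h₁, h₂, h₃, h'⟩

theorem WeakRefines.syncComp (h : Composable S T) (h' : Composable S' T')
    (hS : WeakRefines S' S) (hT : WeakRefines T' T) :
    WeakRefines (syncComp S' T' h') (syncComp S T h) := by
  obtain ⟨RS, hS₀, hS_must, hS_may⟩ := (weakRefines_iff_isWeakSim hS.1).1 hS
  obtain ⟨RT, hT₀, hT_must, hT_may⟩ := (weakRefines_iff_isWeakSim hT.1).1 hT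
  rw [weakRefines_iff_isWeakSim (syncComp_sigEq h h' hS.1 hT.1),
    syncComp_must_eq_of_sigEq h' hS.1 hT.1, syncComp_may_eq_of_sigEq h' hS.1 hT.1]
  exact ⟨fun p q => RS p.1 q.1 ∧ RT p.2 q.2, ⟨hS₀, hT₀⟩, hS_must.syncStep h hT_must,
    hS_may.syncStep h hT_may⟩

end Refinement

section Compatibility

variable {S T S' T' : MIO A}

theorem tauMustStar_eq_of_sigEq (h : SigEq S' S) : S'.tauMustStar = tauStar S.intl S'.must := by
  rw [← h.2.2]
  rfl

/-- The transfer of one compatibility obligation: an output of `S'` is matched by a weak output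
of `S`, which `T` weakly accepts by compatibility, and this acceptance is inherited by `T'`. -/
theorem exists_tauStar_step_of_compat {γ δ : Type} {IS OS IT OT : Set A}
    {mayS' : γ → A → γ → Prop} {mayS : α → A → α → Prop}
    {mustT : β → A → β → Prop} {mustT' : δ → A → δ → Prop}
    {RS : γ → α → Prop} {RT : δ → β → Prop}
    (hS : IsWeakSim IS OS mayS' mayS RS) (hT : IsWeakSim IT OT mustT mustT' (flip RT))
    {s' s₁' : γ} {s : α} {t : β} {t' : δ} {a : A} (haS : a ∈ OS) (haT : a ∈ OT)
    (hs : RS s' s) (ht : RT t' t)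
    (hcompat : ∀ u u', tauStar IS mayS s u → mayS u a u' →
      ∃ w w', tauStar IT mustT t w ∧ mustT w a w')
    (hm : mayS' s' a s₁') : ∃ v v', tauStar IT mustT' t' v ∧ mustT' v a v' := by
  obtain ⟨-, ⟨u, u', hu, hu', -⟩, -⟩ := (hS _ _ hs).1 a haS _ hm
  obtain ⟨w, w', hw, hw'⟩ := hcompat u u' hu hu'
  exact hT.exists_tauStar_step haT ht hw hw'

theorem WeakCompat.of_weakRefines (hc : WeakCompat S T) (hS : WeakRefines S' S)
    (hT : WeakRefines T' T) : WeakCompat S' T' := by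
  obtain ⟨h, hcompat⟩ := hc
  obtain ⟨RS, hS₀, hS_must, hS_may⟩ := (weakRefines_iff_isWeakSim hS.1).1 hS
  obtain ⟨RT, hT₀, hT_must, hT_may⟩ := (weakRefines_iff_isWeakSim hT.1).1 hT
  have h' : Composable S' T' := h.of_sigEq hS.1 hT.1
  refine ⟨h', fun p hp => ?_⟩
  unfold Reachable at hp
  rw [syncComp_may_eq_of_sigEq h' hS.1 hT.1] at hp
  obtain ⟨⟨s, t⟩, hq, hs, ht⟩ := (hS_may.syncStep h hT_may).exists_reachable
    (fun _ _ _ => mem_act_syncComp_of_syncStep h) (y₀ := (S.start, T.start)) ⟨hS₀, hT₀⟩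
    hp
  rw [tauMustStar_eq_of_sigEq hS.1, tauMustStar_eq_of_sigEq hT.1]
  constructor
  · rintro a ⟨haS, haT⟩ s₁' hm
    refine exists_tauStar_step_of_compat hS_may hT_must (Or.inr (hS.1.2.1 ▸ haS))
      (Or.inl (hT.1.1 ▸ haT)) hs ht (fun u u' hu hu' => ?_) hm
    exact (hcompat (u, t) (hq.trans (tauStar_syncStep_left h t hu).reflTransGen)).1 a
      ⟨hS.1.2.1 ▸ haS, hT.1.1 ▸ haT⟩ u' hu'
  · rintro a ⟨haT, haS⟩ t₁' hm
    refine exists_tauStar_step_of_compat hT_may hS_must (Or.inr (hT.1.2.1 ▸ haT))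
      (Or.inl (hS.1.1 ▸ haS)) ht hs (fun u u' hu hu' => ?_) hm
    exact (hcompat (s, u) (hq.trans (tauStar_syncStep_right h s hu).reflTransGen)).2 a
      ⟨hT.1.2.1 ▸ haT, hS.1.1 ▸ haS⟩ u' hu'

end Compatibility

end MIO

/-- MIOs with synchronous composition, weak modal refinement and weak modal
compatibility form an interface theory. -/
theorem weak_sync_interface_theory (A : Type) :
    (∀ S T : MIO A, WeakCompat S T → Composable S T) ∧
    (∀ (S S' T T' : MIO A) (h : Composable S T),
      WeakRefines S' S → WeakRefines T' T →
      Composable S' T' ∧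
        ∀ h' : Composable S' T', WeakRefines (syncComp S' T' h') (syncComp S T h)) ∧
    (∀ S S' T T' : MIO A,
      WeakCompat S T → WeakRefines S' S → WeakRefines T' T →
      WeakCompat S' T') :=
  ⟨fun _ _ hc => hc.1,
    fun _ _ _ _ h hS hT => ⟨h.of_sigEq hS.1 hT.1, fun h' => WeakRefines.syncComp h h' hS hT⟩,
    fun _ _ _ _ hc hS hT => hc.of_weakRefines hS hT⟩
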